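/- Let n be an odd natural number, let a ∈ ℤ^n with support of size t satisfying 1 ≤ t ≤ s ≤ ⌊n/2⌋ for some natural number s with s ≥ 2, let b ∈ ℤ, and let h be the largest even number not exceeding s. Then the number of vectors x ∈ ℝ^n such that exactly one coordinate of x equals 1/2, all other coordinates are in {0,1}, ∑_{i=1}^n x_i = n/2, and b < ⟨a, x⟩ < b + 1, is at most C(n−1, (n−1)/2) · √( 2 n (h+1)² / (π h (n−h−1)) ). -/

import Mathlib

/-!
A point `x` of the set is determined by the coordinate `ℓ` with `x ℓ = 1/2` and the set `A` of
coordinates equal to `1`. Then `2|A| + 1 = n`, and `b < ⟨a, x⟩ < b + 1` becomes the parity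
equation `2 ∑_{i ∈ A} a i + a ℓ = 2b + 1`, which forces `a ℓ ≠ 0`. For fixed `ℓ` in the support `T`
of `a`, the trace of `A` on `T \ {ℓ}` solves a subset-sum equation with nonzero weights, so by the
Littlewood–Offord bound (flip the signs of the negative weights; the solutions become an antichain
and Sperner's theorem applies) it takes at most `C(t-1, ⌊(t-1)/2⌋)` values, while `A \ T` is one of
at most `C(n-t, ⌊(n-t)/2⌋)` sets. Hence there are at most `t C(t-1, ⌊(t-1)/2⌋) C(n-t, ⌊(n-t)/2⌋)`
points. Wallis' product gives `π m C(m, ⌊m/2⌋)² ≤ 2·4^m` and `2·4^(2k) ≤ π (2k+1) C(2k, k)²`, which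
reduce the claim to `t² / ((t-1)(n-t)) ≤ (h+1)² / (h(n-h-1))`: the left side increases with `t`,
and `t ≤ h + 1`.
-/

open Finset
open scoped symmDiff

section LittlewoodOfford

variable {α β : Type*} [DecidableEq α]

theorem IsAntichain.card_le_choose_of_subset_powerset {T : Finset α} {𝒜 : Finset (Finset α)}
    (h𝒜T : 𝒜 ⊆ T.powerset) (h𝒜 : IsAntichain (· ⊆ ·) (𝒜 : Set (Finset α))) :
    #𝒜 ≤ (#T).choose (#T / 2) := by
  have hback : ∀ W ∈ 𝒜, (W.subtype (· ∈ T)).map (.subtype _) = W :=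
    fun W hW ↦ subtype_map_of_mem (mem_powerset.mp (h𝒜T hW))
  have hinj : Set.InjOn (fun W : Finset α ↦ W.subtype (· ∈ T)) 𝒜 := fun W₁ h₁ W₂ h₂ h ↦ by
    rw [← hback W₁ h₁, ← hback W₂ h₂]
    exact congrArg _ h
  have hanti : IsAntichain (· ⊆ ·) (𝒜.image fun W ↦ W.subtype (· ∈ T) : Set (Finset T)) := by
    rw [coe_image]
    rintro _ ⟨W₁, h₁, rfl⟩ _ ⟨W₂, h₂, rfl⟩ hne hsub
    refine h𝒜 h₁ h₂ (fun h ↦ hne (h ▸ rfl)) ?_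
    rw [← hback W₁ h₁, ← hback W₂ h₂]
    exact map_subset_map.mpr hsub
  calc #𝒜 = #(𝒜.image fun W ↦ W.subtype (· ∈ T)) := (card_image_of_injOn hinj).symm
    _ ≤ _ := by simpa using hanti.sperner

omit [DecidableEq α] in
theorem isAntichain_filter_sum_eq [AddCommMonoid β] [LinearOrder β] [IsOrderedCancelAddMonoid β]
    {T : Finset α} {w : α → β} (hw : ∀ i ∈ T, 0 < w i) (d : β) :
    IsAntichain (· ⊆ ·)
      (({W ∈ T.powerset | ∑ i ∈ W, w i = d} : Finset (Finset α)) : Set (Finset α)) := by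
  intro W₁ h₁ W₂ h₂ hne hsub
  simp only [coe_filter, mem_powerset, Set.mem_ofPred_eq] at h₁ h₂
  obtain ⟨i, hi₂, hi₁⟩ := not_subset.mp fun h ↦ hne (hsub.antisymm h)
  have := sum_lt_sum_of_subset hsub hi₂ hi₁ (hw i (h₂.1 hi₂))
    fun j hj _ ↦ (hw j (h₂.1 hj)).le
  exact this.ne (h₁.2.trans h₂.2.symm)

variable [AddCommGroup β] [LinearOrder β] [IsOrderedAddMonoid β]

theorem sum_abs_symmDiff_filter_neg {T Z : Finset α} (hZ : Z ⊆ T) (a : α → β) :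
    ∑ i ∈ Z ∆ {i ∈ T | a i < 0}, |a i| = ∑ i ∈ Z, a i + ∑ i ∈ T with a i < 0, |a i| := by
  have hN : {i ∈ T | a i < 0} ⊆ T := filter_subset _ _
  have hsd : Z ∆ {i ∈ T | a i < 0} ⊆ T := symmDiff_le_sup.trans (sup_le hZ hN)
  have extend : ∀ S ⊆ T, ∀ f : α → β, ∑ i ∈ S, f i = ∑ i ∈ T, if i ∈ S then f i else 0 :=
    fun S hS f ↦ by rw [sum_ite_mem, inter_eq_right.mpr hS]
  rw [extend _ hsd, extend _ hZ, extend _ hN, ← sum_add_distrib]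
  refine sum_congr rfl fun i hi ↦ ?_
  by_cases hZi : i ∈ Z <;> by_cases hai : a i < 0 <;>
    simp [mem_symmDiff, hi, hZi, hai, abs_of_neg, abs_of_nonneg, not_lt.mp]

theorem card_filter_sum_eq_le_choose_half (T : Finset α) {a : α → β} (ha : ∀ i ∈ T, a i ≠ 0)
    (c : β) : #{Z ∈ T.powerset | ∑ i ∈ Z, a i = c} ≤ (#T).choose (#T / 2) := by
  set N := {i ∈ T | a i < 0}
  calc _ ≤ #{W ∈ T.powerset | ∑ i ∈ W, |a i| = c + ∑ i ∈ N, |a i|} := by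
        refine card_le_card_of_injOn (· ∆ N) (fun Z hZ ↦ ?_) (symmDiff_left_injective N).injOn
        simp only [coe_filter, mem_powerset, Set.mem_ofPred_eq] at hZ ⊢
        exact ⟨symmDiff_le_sup.trans (sup_le hZ.1 (filter_subset _ _)),
          by rw [sum_abs_symmDiff_filter_neg hZ.1, hZ.2]⟩
    _ ≤ _ := IsAntichain.card_le_choose_of_subset_powerset (filter_subset _ _)
        (isAntichain_filter_sum_eq (fun i hi ↦ abs_pos.mpr (ha i hi)) _)

theorem card_powersetCard_filter_sum_eq_le {U T : Finset α} (hTU : T ⊆ U) {a : α → β}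
    (ha : ∀ i ∈ T, a i ≠ 0) (ha₀ : ∀ i ∈ U \ T, a i = 0) (k : ℕ) (c : β) :
    #{A ∈ U.powersetCard k | ∑ i ∈ A, a i = c}
      ≤ (#U - #T).choose ((#U - #T) / 2) * (#T).choose (#T / 2) := by
  set S := {A ∈ U.powersetCard k | ∑ i ∈ A, a i = c}
  have hmaps : ∀ A ∈ S, A ∩ T ∈ {Z ∈ T.powerset | ∑ i ∈ Z, a i = c} := by
    intro A hA
    simp only [S, mem_filter, mem_powersetCard] at hA ⊢
    refine ⟨mem_powerset.mpr inter_subset_right, ?_⟩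
    rw [← hA.2]
    refine sum_subset inter_subset_left fun i hiA hiZ ↦ ha₀ i (mem_sdiff.mpr ⟨hA.1.1 hiA, ?_⟩)
    exact fun hiT ↦ hiZ (mem_inter.mpr ⟨hiA, hiT⟩)
  refine (card_le_mul_card_image_of_maps_to hmaps _ fun Z _ ↦ ?_).trans
    (Nat.mul_le_mul_left _ (card_filter_sum_eq_le_choose_half T ha c))
  calc #{A ∈ S | A ∩ T = Z} ≤ #((U \ T).powersetCard (k - #Z)) := by
        refine card_le_card_of_injOn (· \ T) (fun A hA ↦ ?_) fun A₁ h₁ A₂ h₂ h ↦ ?_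
        · simp only [S, coe_filter, mem_filter, mem_powersetCard, Set.mem_ofPred_eq] at hA
          rw [mem_coe, mem_powersetCard]
          obtain ⟨⟨⟨hAU, hAk⟩, -⟩, rfl⟩ := hA
          refine ⟨sdiff_subset_sdiff hAU le_rfl, ?_⟩
          have := card_sdiff_add_card_inter A T
          dsimp only
          omega
        · simp only [S, coe_filter, mem_filter, Set.mem_ofPred_eq] at h₁ h₂
          rw [← sdiff_union_inter A₁ T, ← sdiff_union_inter A₂ T, h₁.2, h₂.2]
          exact congrArg (· ∪ Z) h
    _ ≤ _ := by
        rw [card_powersetCard, card_sdiff_of_subset hTU]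
        exact Nat.choose_le_middle _ _

end LittlewoodOfford

section JeroslowVertices

variable {α : Type*} [Fintype α] [DecidableEq α]

noncomputable def jeroslowVertex (ℓ : α) (A : Finset α) : α → ℝ :=
  fun i ↦ if i = ℓ then 1 / 2 else if i ∈ A then 1 else 0

theorem sum_mul_jeroslowVertex {ℓ : α} {A : Finset α} (hℓ : ℓ ∉ A) (w : α → ℝ) :
    ∑ i, w i * jeroslowVertex ℓ A i = w ℓ / 2 + ∑ i ∈ A, w i := by
  have hA : A ⊆ univ.erase ℓ := fun i hi ↦ mem_erase.mpr ⟨ne_of_mem_of_not_mem hi hℓ, mem_univ i⟩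
  rw [← add_sum_erase _ _ (mem_univ ℓ), ← sum_subset hA fun i hi hiA ↦ by
    simp [jeroslowVertex, ne_of_mem_erase hi, hiA]]
  refine congrArg₂ _ (by simp [jeroslowVertex, div_eq_mul_inv]) (sum_congr rfl fun i hi ↦ ?_)
  simp [jeroslowVertex, ne_of_mem_of_not_mem hi hℓ, hi]

theorem eq_jeroslowVertex {x : α → ℝ} {ℓ : α} (hℓ : x ℓ = 1 / 2)
    (h01 : ∀ i, i ≠ ℓ → x i = 0 ∨ x i = 1) : x = jeroslowVertex ℓ {i | x i = 1} := by
  funext i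
  unfold jeroslowVertex
  split_ifs with h h'
  · rw [h, hℓ]
  · simpa using h'
  · exact (h01 i h).resolve_right (by simpa using h')

def splitPairs (a : α → ℤ) (b : ℤ) : Finset (α × Finset α) :=
  {p | p.1 ∉ p.2 ∧ 2 * #p.2 + 1 = Fintype.card α ∧ 2 * ∑ i ∈ p.2, a i + a p.1 = 2 * b + 1}

theorem ncard_le_card_splitPairs {n : ℕ} (hn : Fintype.card α = n) (a : α → ℤ) (b : ℤ) :
    Set.ncard {x : α → ℝ |
        (∃ ℓ : α, x ℓ = 1 / 2 ∧ ∀ i, i ≠ ℓ → (x i = 0 ∨ x i = 1)) ∧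
        ∑ i, x i = (n : ℝ) / 2 ∧
        (b : ℝ) < ∑ i, (a i : ℝ) * x i ∧ ∑ i, (a i : ℝ) * x i < (b : ℝ) + 1}
      ≤ #(splitPairs a b) := by
  refine (Set.ncard_le_ncard ?_ (finite_toSet _)).trans
    ((Set.ncard_coe_finset _).trans_le (card_image_le (f := fun p ↦ jeroslowVertex p.1 p.2)))
  rintro x ⟨⟨ℓ, hℓ, h01⟩, hsum, hlo, hhi⟩
  set A : Finset α := {i | x i = 1}
  have hℓA : ℓ ∉ A := by norm_num [A, hℓ]
  have hx := eq_jeroslowVertex hℓ h01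
  have hsum' := sum_mul_jeroslowVertex hℓA 1
  simp only [Pi.one_apply, one_mul, sum_const, nsmul_eq_mul, mul_one] at hsum'
  rw [← hx, hsum] at hsum'
  rw [hx, sum_mul_jeroslowVertex hℓA] at hlo hhi
  have hcard : 2 * #A + 1 = Fintype.card α := by
    rw [hn]
    rify
    linarith
  have hsplit : 2 * ∑ i ∈ A, a i + a ℓ = 2 * b + 1 := by
    have hlo' : 2 * b < 2 * ∑ i ∈ A, a i + a ℓ := by rify; linarith
    have hhi' : 2 * ∑ i ∈ A, a i + a ℓ < 2 * b + 2 := by rify; linarith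
    omega
  refine mem_coe.mpr (mem_image.mpr ⟨(ℓ, A), ?_, hx.symm⟩)
  simpa [splitPairs] using ⟨hℓA, hcard, hsplit⟩

theorem card_splitPairs_le {n t : ℕ} (hn : Fintype.card α = n) {a : α → ℤ}
    (ht : #{i | a i ≠ 0} = t) (b : ℤ) :
    #(splitPairs a b) ≤ t * ((t - 1).choose ((t - 1) / 2) * (n - t).choose ((n - t) / 2)) := by
  set T : Finset α := {i | a i ≠ 0}
  have hmaps : ∀ p ∈ splitPairs a b, p.1 ∈ T := by
    intro p hp
    simp only [splitPairs, mem_filter, mem_univ, true_and] at hp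
    simp only [T, mem_filter, mem_univ, true_and]
    omega
  rw [← ht, mul_comm, Nat.mul_comm (Nat.choose _ _)]
  refine card_le_mul_card_image_of_maps_to hmaps _ fun ℓ hℓ ↦ ?_
  have hT' : T.erase ℓ ⊆ univ.erase ℓ := erase_subset_erase ℓ (subset_univ T)
  calc #{p ∈ splitPairs a b | p.1 = ℓ}
      ≤ #{A ∈ (univ.erase ℓ).powersetCard (n / 2) | ∑ i ∈ A, 2 * a i = 2 * b + 1 - a ℓ} := by
        refine card_le_card_of_injOn Prod.snd (fun p hp ↦ ?_) fun p₁ h₁ p₂ h₂ h ↦ ?_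
        · simp only [splitPairs, coe_filter, mem_filter, mem_univ, true_and,
            Set.mem_ofPred_eq] at hp
          obtain ⟨⟨hℓA, hcard, hsum⟩, rfl⟩ := hp
          simp only [coe_filter, mem_powersetCard, subset_erase, subset_univ, true_and,
            Set.mem_ofPred_eq, ← mul_sum]
          exact ⟨⟨hℓA, by omega⟩, by omega⟩
        · simp only [coe_filter, Set.mem_ofPred_eq] at h₁ h₂
          exact Prod.ext (h₁.2.trans h₂.2.symm) h
    _ ≤ _ := card_powersetCard_filter_sum_eq_le hT' (by simp [T]) (by simp +contextual [T]) _ _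
    _ = _ := by
        rw [card_erase_of_mem (mem_univ ℓ), card_erase_of_mem hℓ, card_univ, hn,
          Nat.sub_sub_sub_cancel_right (card_pos.mpr ⟨ℓ, hℓ⟩)]

end JeroslowVertices

section CentralBinomialBounds

open Real Nat

theorem centralBinom_succ_eq_two_mul_choose (k : ℕ) :
    centralBinom (k + 1) = 2 * (2 * k + 1).choose k := by
  rw [centralBinom_eq_two_mul_choose, show 2 * (k + 1) = 2 * k + 1 + 1 by ring, choose_succ_succ,
    choose_symm_half]
  ring

theorem sq_centralBinom_mul_wallis (k : ℕ) :
    (centralBinom k : ℝ) ^ 2 * Wallis.W k * (2 * k + 1) = 16 ^ k := by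
  have hfact : (centralBinom k : ℝ) * k ! * k ! = (2 * k)! := by
    rw [centralBinom_eq_two_mul_choose, two_mul]
    exact_mod_cast add_choose_mul_factorial_mul_factorial k k
  have hpos : (centralBinom k : ℝ) ≠ 0 := cast_ne_zero.mpr (centralBinom_ne_zero k)
  rw [Wallis.W_eq_factorial_ratio, ← hfact, pow_mul]
  field_simp
  norm_num

theorem pi_mul_sq_centralBinom_le (k : ℕ) : π * k * (centralBinom k : ℝ) ^ 2 ≤ 16 ^ k := by
  have hW := Wallis.le_W k
  rw [div_mul_eq_mul_div, div_le_iff₀ (by positivity)] at hW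
  rw [← sq_centralBinom_mul_wallis k]
  nlinarith [mul_le_mul_of_nonneg_left hW
    (by positivity : (0 : ℝ) ≤ (centralBinom k : ℝ) ^ 2 * (2 * k + 1)),
    mul_nonneg pi_pos.le (sq_nonneg (centralBinom k : ℝ))]

theorem two_mul_sixteen_pow_le (k : ℕ) :
    2 * 16 ^ k ≤ π * (2 * k + 1) * (centralBinom k : ℝ) ^ 2 := by
  rw [← sq_centralBinom_mul_wallis k]
  linarith [mul_le_mul_of_nonneg_left (Wallis.W_le k)
    (by positivity : (0 : ℝ) ≤ (centralBinom k : ℝ) ^ 2 * (2 * k + 1))]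

theorem pi_mul_sq_choose_half_le (m : ℕ) : π * m * (m.choose (m / 2) : ℝ) ^ 2 ≤ 2 * 4 ^ m := by
  obtain ⟨k, rfl | rfl⟩ := even_or_odd' m
  · have := pi_mul_sq_centralBinom_le k
    rw [Nat.mul_div_cancel_left k two_pos, ← centralBinom_eq_two_mul_choose, pow_mul]
    push_cast
    norm_num
    linarith
  · have := pi_mul_sq_centralBinom_le (k + 1)
    rw [show (2 * k + 1) / 2 = k by omega, show (4 : ℝ) ^ (2 * k + 1) = 4 * 16 ^ k by
      rw [pow_succ, pow_mul, mul_comm]; norm_num]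
    rw [centralBinom_succ_eq_two_mul_choose, pow_succ (16 : ℝ)] at this
    push_cast at this ⊢
    linarith [mul_nonneg pi_pos.le (sq_nonneg ((2 * k + 1).choose k : ℝ))]

theorem two_mul_four_pow_le {m : ℕ} (hm : Even m) :
    2 * 4 ^ m ≤ π * (m + 1) * (m.choose (m / 2) : ℝ) ^ 2 := by
  obtain ⟨k, rfl⟩ := hm
  rw [← two_mul, Nat.mul_div_cancel_left k two_pos, ← centralBinom_eq_two_mul_choose, pow_mul]
  push_cast
  norm_num
  exact two_mul_sixteen_pow_le k

theorem sq_choose_half_mul_choose_half_le {u v : ℕ} (hu : 0 < u) (hv : 0 < v)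
    (huv : Even (u + v)) :
    ((u.choose (u / 2) : ℝ) * v.choose (v / 2)) ^ 2
      ≤ 2 * (u + v + 1) / (π * u * v) * ((u + v).choose ((u + v) / 2) : ℝ) ^ 2 := by
  have hprod := mul_le_mul (pi_mul_sq_choose_half_le u) (pi_mul_sq_choose_half_le v)
    (by positivity) (by positivity)
  have hlow := two_mul_four_pow_le huv
  push_cast at hlow
  rw [div_mul_eq_mul_div, le_div_iff₀ (by positivity)]
  refine le_of_mul_le_mul_left ?_ pi_pos
  rw [pow_add] at hlow
  linarith

theorem add_one_sq_div_mul_le {u h n : ℝ} (hu : 1 ≤ u) (huh : u ≤ h) (hhn : h + 1 < n) :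
    (u + 1) ^ 2 / (u * (n - u - 1)) ≤ (h + 1) ^ 2 / (h * (n - h - 1)) := by
  rw [div_le_div_iff₀ (by nlinarith) (by nlinarith)]
  have hQ : 0 ≤ (n - 1) * (u * h - 1) + 2 * u * h + h + u := by
    have : 0 ≤ (n - 1) * (u * h - 1) := mul_nonneg (by linarith) (by nlinarith)
    nlinarith
  have hfactor : (h + 1) ^ 2 * (u * (n - u - 1)) - (u + 1) ^ 2 * (h * (n - h - 1))
      = (h - u) * ((n - 1) * (u * h - 1) + 2 * u * h + h + u) := by ring
  linarith [mul_nonneg (sub_nonneg.mpr huh) hQ]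

theorem one_le_two_mul_mul_add_one_sq_div {n h : ℝ} (hh : 0 < h) (hhn : h + 1 < n) :
    1 ≤ 2 * n * (h + 1) ^ 2 / (π * h * (n - h - 1)) := by
  rw [one_le_div (mul_pos (mul_pos pi_pos hh) (by linarith))]
  have hpi : π * h * (n - h - 1) ≤ 4 * h * (n - h - 1) := by
    gcongr
    · linarith
    · exact pi_le_four
  nlinarith [mul_pos (by linarith : (0 : ℝ) < n) (by positivity : (0 : ℝ) < h ^ 2 + 1)]

theorem sq_mul_choose_half_mul_choose_half_le {n u h : ℕ} (hn : Odd n) (hu : 0 < u) (huh : u ≤ h)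
    (hhn : h + 1 < n) :
    ((u + 1 : ℝ) * (u.choose (u / 2) * (n - (u + 1)).choose ((n - (u + 1)) / 2))) ^ 2
      ≤ ((n - 1).choose ((n - 1) / 2) : ℝ) ^ 2
        * (2 * n * (h + 1) ^ 2 / (π * h * ((n : ℝ) - h - 1))) := by
  set v := n - (u + 1)
  have hv : 0 < v := by omega
  have hv' : (v : ℝ) = n - u - 1 := by
    rw [Nat.cast_sub (by omega)]
    push_cast
    ring
  have hC := sq_choose_half_mul_choose_half_le hu hv
    (show u + v = n - 1 by omega ▸ Nat.Odd.sub_odd hn odd_one)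
  rw [show u + v = n - 1 by omega, show (u : ℝ) + v + 1 = n by rw [hv']; ring] at hC
  set C : ℝ := ↑((n - 1).choose ((n - 1) / 2))
  have hmono := add_one_sq_div_mul_le (u := u) (h := h) (n := n) (by exact_mod_cast hu)
    (by exact_mod_cast huh) (by exact_mod_cast hhn)
  have hu' : (0 : ℝ) < u := by exact_mod_cast hu
  have hvR : (0 : ℝ) < v := by exact_mod_cast hv
  calc ((u + 1 : ℝ) * ((u.choose (u / 2) : ℝ) * v.choose (v / 2))) ^ 2
      = (u + 1) ^ 2 * ((u.choose (u / 2) : ℝ) * v.choose (v / 2)) ^ 2 := by ring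
    _ ≤ (u + 1) ^ 2 * (2 * n / (π * u * v) * C ^ 2) := by gcongr
    _ = C ^ 2 * (2 * n / π) * ((u + 1) ^ 2 / (u * (n - u - 1))) := by
        rw [← hv']
        field_simp
    _ ≤ C ^ 2 * (2 * n / π) * ((h + 1) ^ 2 / (h * (n - h - 1))) := by gcongr
    _ = _ := by field_simp

theorem mul_choose_half_mul_choose_half_le {n t h : ℕ} (hn : Odd n) (hth : t ≤ h + 1)
    (hh : 0 < h) (hhn : h + 1 < n) :
    (t : ℝ) * ((t - 1).choose ((t - 1) / 2) * (n - t).choose ((n - t) / 2))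
      ≤ ((n - 1).choose ((n - 1) / 2) : ℝ) *
        Real.sqrt (2 * n * (h + 1) ^ 2 / (π * h * ((n : ℝ) - h - 1))) := by
  rcases Nat.eq_zero_or_pos t with rfl | ht
  · simp only [CharP.cast_eq_zero, zero_mul]
    positivity
  obtain ⟨u, rfl⟩ : ∃ u, t = u + 1 := ⟨t - 1, by omega⟩
  rw [Nat.add_sub_cancel]
  rcases Nat.eq_zero_or_pos u with rfl | hu
  · simp only [zero_add, Nat.zero_div, choose_self, cast_one, one_mul]
    exact le_mul_of_one_le_right (cast_nonneg _) (one_le_sqrt.mpr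
      (one_le_two_mul_mul_add_one_sq_div (by exact_mod_cast hh) (by exact_mod_cast hhn)))
  rw [← sqrt_sq (cast_nonneg _ : (0 : ℝ) ≤ (n - 1).choose ((n - 1) / 2)),
    ← sqrt_mul (sq_nonneg _)]
  refine le_sqrt_of_sq_le ?_
  exact_mod_cast sq_mul_choose_half_mul_choose_half_le hn hu (by omega) hhn

end CentralBinomialBounds

open Real in
theorem split_set_vertices_sqrt_bound_general (n s h t : ℕ) (hn : Odd n)
    (a : Fin n → ℤ) (hT : (Finset.univ.filter (fun i => a i ≠ 0)).card = t)
    (hts : t ≤ s) (hs1 : 2 ≤ s) (hs2 : s ≤ n / 2)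
    (hh : Even h ∧ h ≤ s ∧ s < h + 2) (b : ℤ) :
    (Set.ncard {x : Fin n → ℝ |
        (∃ ℓ : Fin n, x ℓ = 1 / 2 ∧ ∀ i, i ≠ ℓ → (x i = 0 ∨ x i = 1)) ∧
        ∑ i, x i = (n : ℝ) / 2 ∧
        (b : ℝ) < ∑ i, (a i : ℝ) * x i ∧ ∑ i, (a i : ℝ) * x i < (b : ℝ) + 1} : ℝ)
      ≤ ((n - 1).choose ((n - 1) / 2) : ℝ) *
        Real.sqrt (2 * n * (h + 1) ^ 2 / (π * h * ((n : ℝ) - h - 1))) := by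
  obtain ⟨-, hhs, hsh⟩ := hh
  calc _ ≤ (#(splitPairs a b) : ℝ) := by
        exact_mod_cast ncard_le_card_splitPairs (Fintype.card_fin n) a b
    _ ≤ ((t * ((t - 1).choose ((t - 1) / 2) * (n - t).choose ((n - t) / 2)) : ℕ) : ℝ) := by
        exact_mod_cast card_splitPairs_le (Fintype.card_fin n) hT b
    _ ≤ _ := by
        push_cast
        exact mul_choose_half_mul_choose_half_le hn (by omega) (by omega) (by omega)

open Real in
/-- Combined bound from the proof of Theorem 1.2: for `n` odd, `a ∈ ℤ^n` of
support size `t` with `1 ≤ t ≤ s ≤ ⌊n/2⌋` (`s ≥ 2`), `b ∈ ℤ`, and `h` the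
largest even number not exceeding `s`, the number of optimal LP vertices of the
Jeroslow polytope (points with exactly one coordinate `1/2`, all others in
`{0,1}`, and coordinate sum `n/2`) lying strictly inside the split set
`{x : b < ⟨a,x⟩ < b+1}` is at most
`C(n-1, (n-1)/2) * √(2n(h+1)² / (π h (n-h-1)))`. -/
theorem split_set_vertices_sqrt_bound (n s h t : ℕ) (hn : Odd n)
    (a : Fin n → ℤ) (hT : (Finset.univ.filter (fun i => a i ≠ 0)).card = t)
    (ht1 : 1 ≤ t) (hts : t ≤ s) (hs1 : 2 ≤ s) (hs2 : s ≤ n / 2)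
    (hh : Even h ∧ h ≤ s ∧ s < h + 2) (b : ℤ) :
    (Set.ncard {x : Fin n → ℝ |
        (∃ ℓ : Fin n, x ℓ = 1 / 2 ∧ ∀ i, i ≠ ℓ → (x i = 0 ∨ x i = 1)) ∧
        ∑ i, x i = (n : ℝ) / 2 ∧
        (b : ℝ) < ∑ i, (a i : ℝ) * x i ∧ ∑ i, (a i : ℝ) * x i < (b : ℝ) + 1} : ℝ)
      ≤ ((n - 1).choose ((n - 1) / 2) : ℝ) *
        Real.sqrt (2 * n * (h + 1) ^ 2 / (π * h * ((n : ℝ) - h - 1))) :=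
  split_set_vertices_sqrt_bound_general n s h t hn a hT hts hs1 hs2 hh b
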